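/- Let n ≥ 5 and α₁,…,αₙ ∈ ℂ with α₁ ≠ 0. Then the transposed 0-Poisson algebra TP₀(α₁,…,αₙ) is isomorphic to TP₀(1,0,…,0), i.e., to the structure on μ₀ⁿ with [e₁,e₂] = e₁ and all other basis brackets zero. -/

import Mathlib

open Finset

/-- The null-filiform associative multiplication on `ℂⁿ = Fin n → ℂ`.
The basis vector `e_i` (1-based) corresponds to the coordinate `i - 1`, and
`e_i · e_j = e_{i+j}` if `i + j ≤ n`, and `0` otherwise. -/
noncomputable def nfMul (n : ℕ) (x y : Fin n → ℂ) : Fin n → ℂ :=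
  fun k => ∑ i : Fin n, ∑ j : Fin n,
    if (i : ℕ) + (j : ℕ) + 1 = (k : ℕ) then x i * y j else 0

/-- The 1-based basis vector `e i` of `ℂⁿ` (zero if `i` is out of range `1,…,n`). -/
noncomputable def nfE (n : ℕ) (i : ℕ) : Fin n → ℂ :=
  fun k => if (k : ℕ) + 1 = i then 1 else 0

/-- The coefficient of the basis vector `e i` (1-based) in `x`. -/
noncomputable def nfCoeff (n : ℕ) (x : Fin n → ℂ) (i : ℕ) : ℂ :=
  ∑ k : Fin n, if (k : ℕ) + 1 = i then x k else 0

/-- A Lie bracket (bilinear, alternating, satisfying the Jacobi identity)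
on a complex vector space. -/
structure LieBracketOn (L : Type*) [AddCommGroup L] [Module ℂ L] where
  br : L → L → L
  add_left : ∀ x y z, br (x + y) z = br x z + br y z
  smul_left : ∀ (c : ℂ) (x y : L), br (c • x) y = c • br x y
  add_right : ∀ x y z, br x (y + z) = br x y + br x z
  smul_right : ∀ (c : ℂ) (x y : L), br x (c • y) = c • br x y
  alt : ∀ x, br x x = 0
  jacobi : ∀ x y z, br (br x y) z + br (br y z) x + br (br z x) y = 0

/-- `(μ₀ⁿ, ·, [-,-])` is a transposed `δ`-Poisson algebra:
`δ • (z · [x,y]) = [z·x, y] + [x, z·y]`. -/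
noncomputable def IsTransposedPoisson (n : ℕ) (δ : ℂ) (B : LieBracketOn (Fin n → ℂ)) : Prop :=
  ∀ x y z, δ • nfMul n z (B.br x y) = B.br (nfMul n z x) y + B.br x (nfMul n z y)

/-- `(μ₀ⁿ, ·, [-,-])` is a `δ`-Poisson algebra:
`[x, y·z] = δ • ([x,y]·z + y·[x,z])`. -/
noncomputable def IsDeltaPoisson (n : ℕ) (δ : ℂ) (B : LieBracketOn (Fin n → ℂ)) : Prop :=
  ∀ x y z, B.br x (nfMul n y z) = δ • (nfMul n (B.br x y) z + nfMul n y (B.br x z))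

/-- The bracket of the transposed 0-Poisson algebra `TP₀(α₁,…,αₙ)` on `μ₀ⁿ`:
determined by `[e₁,e₂] = ∑_{t=1}^n αₜ eₜ` and `[eᵢ,eⱼ] = 0` for all other
pairs `i < j`. -/
noncomputable def brTP0 (n : ℕ) (α : ℕ → ℂ) (x y : Fin n → ℂ) : Fin n → ℂ :=
  (nfCoeff n x 1 * nfCoeff n y 2 - nfCoeff n x 2 * nfCoeff n y 1) •
    ∑ t ∈ Finset.Icc 1 n, α t • nfE n t

/-- The bracket of the transposed 1-Poisson algebra `TP₁(α₂,…,αₙ)` on `μ₀ⁿ`: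
determined by `[e₁,eᵢ] = ∑_{t=i}^n α_{t-i+2} eₜ` for `2 ≤ i ≤ n` and
`[eᵢ,eⱼ] = 0` for `2 ≤ i < j ≤ n`. -/
noncomputable def brTP1 (n : ℕ) (α : ℕ → ℂ) (x y : Fin n → ℂ) : Fin n → ℂ :=
  ∑ i ∈ Finset.Icc 2 n,
    (nfCoeff n x 1 * nfCoeff n y i - nfCoeff n x i * nfCoeff n y 1) •
      ∑ t ∈ Finset.Icc i n, α (t + 2 - i) • nfE n t

/-- The bracket of the transposed `δ`-Poisson algebra `TP_δ(a, b, c)`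
(`a = α_{n-2}`, `b = α_{n-1}`, `c = αₙ`) on `μ₀ⁿ`: determined by
`[e₁,e₂] = a e_{n-2} + b e_{n-1} + c eₙ`, `[e₁,e₃] = δ(a e_{n-1} + b eₙ)`,
`[e₂,e₃] = ((δ²-δ)/2) a eₙ`, `[e₁,e₄] = ((δ²+δ)/2) a eₙ`, and `[eᵢ,eⱼ] = 0`
for all other pairs `i < j`. -/
noncomputable def brTPd (n : ℕ) (δ a b c : ℂ) (x y : Fin n → ℂ) : Fin n → ℂ :=
  (nfCoeff n x 1 * nfCoeff n y 2 - nfCoeff n x 2 * nfCoeff n y 1) •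
      (a • nfE n (n-2) + b • nfE n (n-1) + c • nfE n n)
  + (nfCoeff n x 1 * nfCoeff n y 3 - nfCoeff n x 3 * nfCoeff n y 1) •
      (δ • (a • nfE n (n-1) + b • nfE n n))
  + (nfCoeff n x 2 * nfCoeff n y 3 - nfCoeff n x 3 * nfCoeff n y 2) •
      (((δ^2 - δ)/2 * a) • nfE n n)
  + (nfCoeff n x 1 * nfCoeff n y 4 - nfCoeff n x 4 * nfCoeff n y 1) •
      (((δ^2 + δ)/2 * a) • nfE n n)

/-- Two bracket structures on `μ₀ⁿ` are isomorphic (as transposed δ-Poisson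
algebras): there is a linear bijection preserving both `·` and `[-,-]`. -/
noncomputable def TPIso (n : ℕ) (B B' : (Fin n → ℂ) → (Fin n → ℂ) → (Fin n → ℂ)) : Prop :=
  ∃ φ : (Fin n → ℂ) ≃ₗ[ℂ] (Fin n → ℂ),
    (∀ x y, φ (nfMul n x y) = nfMul n (φ x) (φ y)) ∧
    ∀ x y, φ (B x y) = B' (φ x) (φ y)

/-!
Think of `μ₀ⁿ` as the ideal `(X)` of `ℂ[X]/(X^{n+1})`, with `eₜ = Xᵗ`. For every `w` with
`w₁ ≠ 0`, substituting `w` for `X` is an automorphism of `μ₀ⁿ`. Modulo `μ₀ⁿ · μ₀ⁿ · μ₀ⁿ` it sends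
`(x₁, x₂)` to `(w₁x₁, w₂x₁ + w₁²x₂)`, so it multiplies the coefficient `x₁y₂ - x₂y₁` of the bracket
`[x, y]` of `TP₀` by `w₁³`; hence it is an isomorphism `TP₀(α) ≅ TP₀(β)` as soon as it sends
`∑ αₜeₜ` to `w₁³ ∑ βₜeₜ`. Substituting `∑ αₜeₜ` gives `TP₀(α₁³, 0, …, 0) ≅ TP₀(α)`, and the
dilation `e₁ ↦ a³e₁` with `a² = α₁` gives `TP₀(α₁³, 0, …, 0) ≅ TP₀(1, 0, …, 0)`.
-/

section NullFiliform

variable {n : ℕ}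

theorem Fin.sum_univ_ite_val_eq {M : Type*} [AddCommMonoid M] (m : ℕ) (g : ℕ → M)
    (hg : n ≤ m → g m = 0) :
    ∑ k : Fin n, (if m = (k : ℕ) then g k else 0) = g m := by
  rw [Fin.sum_univ_eq_sum_range (fun k => if m = k then g k else 0), Finset.sum_ite_eq]
  split_ifs with h
  · rfl
  · exact (hg (by simpa using h)).symm

theorem Fin.sum_univ_ite_ite_val_eq {M : Type*} [AddCommMonoid M] (P : ℕ → Prop)
    [DecidablePred P] (hP : ∀ m, P m → m < n) (m : ℕ) (f : M) :
    ∑ k : Fin n, (if P k then (if m = (k : ℕ) then f else 0) else 0) = if P m then f else 0 := by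
  rw [← Fin.sum_univ_ite_val_eq m (fun k => if P k then f else 0)
    fun h => if_neg fun hm => (hP m hm).not_ge h]
  exact Finset.sum_congr rfl fun k _ => by split_ifs <;> simp_all

theorem nfMul_assoc (x y z : Fin n → ℂ) :
    nfMul n (nfMul n x y) z = nfMul n x (nfMul n y z) := by
  ext k
  have collapse_left (c m : ℕ) (f : ℂ) :
      ∑ p : Fin n, (if p + c + 1 = (k : ℕ) then (if m = (p : ℕ) then f else 0) else 0) =
        if m + c + 1 = k then f else 0 :=
    Fin.sum_univ_ite_ite_val_eq (fun p => p + c + 1 = (k : ℕ)) (fun _ _ => by omega) m f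
  have collapse_right (a m : ℕ) (f : ℂ) :
      ∑ q : Fin n, (if a + q + 1 = (k : ℕ) then (if m = (q : ℕ) then f else 0) else 0) =
        if a + m + 1 = k then f else 0 :=
    Fin.sum_univ_ite_ite_val_eq (fun q => a + q + 1 = (k : ℕ)) (fun _ _ => by omega) m f
  -- both sides become `∑ a b c, if a + b + c + 2 = k then x a * y b * z c else 0`
  simp only [nfMul, Finset.sum_mul, Finset.mul_sum, ite_mul, mul_ite, zero_mul, mul_zero,
    Finset.ite_sum_zero]
  rw [Finset.sum_comm]
  conv_lhs => arg 2; ext c; rw [← Finset.sum_comm_cycle]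
  conv_rhs => arg 2; ext a; rw [← Finset.sum_comm_cycle]
  simp only [collapse_left, collapse_right]
  rw [← Finset.sum_comm_cycle]
  refine Finset.sum_congr rfl fun a _ => Finset.sum_congr rfl fun b _ =>
    Finset.sum_congr rfl fun c _ => ?_
  rw [mul_assoc]
  exact if_congr (by omega) rfl rfl

noncomputable def nfMulₗ (n : ℕ) : (Fin n → ℂ) →ₗ[ℂ] (Fin n → ℂ) →ₗ[ℂ] (Fin n → ℂ) :=
  LinearMap.mk₂ ℂ (nfMul n)
    (fun x x' y => by
      ext k
      simp only [nfMul, Pi.add_apply, add_mul, ← Finset.sum_add_distrib, ite_add_zero])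
    (fun c x y => by
      ext k
      simp only [nfMul, Pi.smul_apply, smul_eq_mul, Finset.mul_sum, mul_ite, mul_zero, mul_assoc])
    (fun x y y' => by
      ext k
      simp only [nfMul, Pi.add_apply, mul_add, ← Finset.sum_add_distrib, ite_add_zero])
    (fun c x y => by
      ext k
      simp only [nfMul, Pi.smul_apply, smul_eq_mul, Finset.mul_sum, mul_ite, mul_zero,
        mul_left_comm])

theorem nfMulₗ_apply (x y : Fin n → ℂ) : nfMulₗ n x y = nfMul n x y := rfl

theorem nfMul_apply_of_lt {x y : Fin n → ℂ} {a b : ℕ} (hx : ∀ i : Fin n, (i : ℕ) < a → x i = 0)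
    (hy : ∀ j : Fin n, (j : ℕ) < b → y j = 0) {k : Fin n} (hk : (k : ℕ) < a + b + 1) :
    nfMul n x y k = 0 := by
  refine Finset.sum_eq_zero fun i _ => Finset.sum_eq_zero fun j _ => ?_
  split_ifs with h
  · rcases lt_or_ge (i : ℕ) a with hi | hi
    · rw [hx i hi, zero_mul]
    · rw [hy j (by omega), mul_zero]
  · rfl

theorem nfMul_apply_of_eq {x y : Fin n → ℂ} {a b : ℕ} (hx : ∀ i : Fin n, (i : ℕ) < a → x i = 0)
    (hy : ∀ j : Fin n, (j : ℕ) < b → y j = 0) {k : Fin n} (hk : (k : ℕ) = a + b + 1) :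
    nfMul n x y k = x ⟨a, by omega⟩ * y ⟨b, by omega⟩ := by
  rw [nfMul, Finset.sum_eq_single ⟨a, by omega⟩, Finset.sum_eq_single ⟨b, by omega⟩]
  · simp [hk]
  · intro j _ hj
    rw [if_neg fun h => hj (Fin.ext (by simp at h ⊢; omega))]
  · simp
  · intro i _ hi
    refine Finset.sum_eq_zero fun j _ => ?_
    split_ifs with h
    · rcases lt_or_gt_of_ne (Fin.val_ne_of_ne hi) with hi | hi
      · rw [hx i hi, zero_mul]
      · rw [hy j (by simp at hi; omega), mul_zero]
    · rfl
  · simp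

/-- `nfPow n w t = w ^ (t + 1)`, the image of the `t`-th coordinate vector `e_{t+1}` under the
substitution `e₁ ↦ w` (`μ₀ⁿ` has no unit, so there is no `w ^ 0`). -/
noncomputable def nfPow (n : ℕ) (w : Fin n → ℂ) : ℕ → Fin n → ℂ
  | 0 => w
  | t + 1 => nfMul n w (nfPow n w t)

theorem nfPow_apply_of_lt (w : Fin n → ℂ) {t : ℕ} {k : Fin n} (hk : (k : ℕ) < t) :
    nfPow n w t k = 0 := by
  induction t generalizing k with
  | zero => omega
  | succ t ih =>
    exact nfMul_apply_of_lt (a := 0) (fun _ h => absurd h (Nat.not_lt_zero _)) (fun _ => ih)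
      (by omega)

theorem nfPow_apply_self (w : Fin n → ℂ) {t : ℕ} (ht : t < n) :
    nfPow n w t ⟨t, ht⟩ = w ⟨0, by omega⟩ ^ (t + 1) := by
  induction t with
  | zero => simp [nfPow]
  | succ t ih =>
    rw [nfPow, nfMul_apply_of_eq (a := 0) (b := t) (fun _ h => absurd h (Nat.not_lt_zero _))
      (fun _ => nfPow_apply_of_lt w) (by simp), ih, pow_succ' _ (t + 1)]

theorem nfPow_eq_zero (w : Fin n → ℂ) {t : ℕ} (ht : n ≤ t) : nfPow n w t = 0 :=
  funext fun _ => nfPow_apply_of_lt w (by omega)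

theorem nfMul_nfPow (w : Fin n → ℂ) (s t : ℕ) :
    nfMul n (nfPow n w s) (nfPow n w t) = nfPow n w (s + t + 1) := by
  induction s generalizing t with
  | zero => rw [zero_add]; rfl
  | succ s ih => rw [nfPow, nfMul_assoc, ih, show s + 1 + t + 1 = s + t + 1 + 1 by omega]; rfl

noncomputable def nfSubst (n : ℕ) (w : Fin n → ℂ) : (Fin n → ℂ) →ₗ[ℂ] (Fin n → ℂ) :=
  Fintype.linearCombination ℂ fun t : Fin n => nfPow n w t

theorem nfSubst_apply (w x : Fin n → ℂ) (k : Fin n) :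
    nfSubst n w x k = ∑ t : Fin n, x t * nfPow n w t k := by
  simp [nfSubst, Fintype.linearCombination_apply, Finset.sum_apply]

theorem nfSubst_mul (w x y : Fin n → ℂ) :
    nfSubst n w (nfMul n x y) = nfMul n (nfSubst n w x) (nfSubst n w y) := by
  change _ = nfMulₗ n (nfSubst n w x) (nfSubst n w y)
  simp only [nfSubst, Fintype.linearCombination_apply, map_sum, map_smul,
    LinearMap.sum_apply, LinearMap.smul_apply]
  simp only [nfMulₗ_apply, nfMul_nfPow, Finset.smul_sum, smul_smul]
  simp only [nfMul, Finset.sum_smul, ite_smul, zero_smul]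
  rw [← Finset.sum_comm_cycle, Finset.sum_comm]
  refine Finset.sum_congr rfl fun j _ => Finset.sum_congr rfl fun i _ => ?_
  rw [Fin.sum_univ_ite_val_eq _ (fun k => (x i * y j) • nfPow n w k)
    fun h => by rw [nfPow_eq_zero w h, smul_zero], mul_comm]

theorem nfSubst_apply_of_forall_lt (w : Fin n → ℂ) {x : Fin n → ℂ} {k : Fin n}
    (hx : ∀ t < k, x t = 0) : nfSubst n w x k = x k * w ⟨0, k.pos⟩ ^ ((k : ℕ) + 1) := by
  rw [nfSubst_apply, Fintype.sum_eq_single k, ← nfPow_apply_self w k.isLt]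
  intro t ht
  rcases lt_or_gt_of_ne ht with ht | ht
  · rw [hx t ht, zero_mul]
  · rw [nfPow_apply_of_lt w ht, mul_zero]

theorem nfSubst_apply_zero (w x : Fin n → ℂ) (h0 : 0 < n) :
    nfSubst n w x ⟨0, h0⟩ = x ⟨0, h0⟩ * w ⟨0, h0⟩ := by
  simpa using
    nfSubst_apply_of_forall_lt w (k := ⟨0, h0⟩) fun t ht => absurd ht (by simp [Fin.lt_def])

theorem nfSubst_apply_one (w x : Fin n → ℂ) (h1 : 1 < n) :
    nfSubst n w x ⟨1, h1⟩ = x ⟨0, by omega⟩ * w ⟨1, h1⟩ + x ⟨1, h1⟩ * w ⟨0, by omega⟩ ^ 2 := by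
  rw [nfSubst_apply, Fintype.sum_eq_add ⟨0, by omega⟩ ⟨1, h1⟩ (by simp [Fin.ext_iff]),
    nfPow_apply_self]
  · rfl
  · rintro t ⟨ht0, ht1⟩
    rw [nfPow_apply_of_lt w (by simp [Fin.ext_iff] at ht0 ht1 ⊢; omega), mul_zero]

theorem nfSubst_injective (w : Fin n → ℂ) (h0 : 0 < n) (hw : w ⟨0, h0⟩ ≠ 0) :
    Function.Injective (nfSubst n w) := by
  rw [← LinearMap.ker_eq_bot, LinearMap.ker_eq_bot']
  intro x hx
  funext k
  induction k using WellFoundedLT.induction with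
  | _ k ih =>
    have hk := congrFun hx k
    rw [nfSubst_apply_of_forall_lt w ih] at hk
    exact (mul_eq_zero.1 hk).resolve_right (pow_ne_zero _ hw)

theorem nfSubst_nfE_one (w : Fin n → ℂ) : nfSubst n w (nfE n 1) = w := by
  ext k
  rw [nfSubst_apply, Fintype.sum_eq_single ⟨0, k.pos⟩]
  · simp [nfE, nfPow]
  · intro t ht
    rw [nfE, if_neg fun h => ht (Fin.ext (by simpa using h)), zero_mul]

theorem nfCoeff_eq (x : Fin n → ℂ) (k : Fin n) {m : ℕ} (hm : (k : ℕ) + 1 = m) :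
    nfCoeff n x m = x k := by
  simp_rw [nfCoeff, ← hm, add_left_inj, Fin.val_inj, Finset.sum_ite_eq', Finset.mem_univ, if_true]

noncomputable def nfWedge (n : ℕ) (x y : Fin n → ℂ) : ℂ :=
  nfCoeff n x 1 * nfCoeff n y 2 - nfCoeff n x 2 * nfCoeff n y 1

theorem nfWedge_nfSubst (w : Fin n → ℂ) (h1 : 1 < n) (x y : Fin n → ℂ) :
    nfWedge n (nfSubst n w x) (nfSubst n w y) = w ⟨0, by omega⟩ ^ 3 * nfWedge n x y := by
  have coeff_one (z : Fin n → ℂ) : nfCoeff n z 1 = z ⟨0, by omega⟩ := nfCoeff_eq z _ rfl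
  have coeff_two (z : Fin n → ℂ) : nfCoeff n z 2 = z ⟨1, h1⟩ := nfCoeff_eq z _ rfl
  simp only [nfWedge, coeff_one, coeff_two, nfSubst_apply_zero, nfSubst_apply_one]
  ring

noncomputable def nfVec (n : ℕ) (α : ℕ → ℂ) : Fin n → ℂ :=
  ∑ t ∈ Finset.Icc 1 n, α t • nfE n t

theorem brTP0_eq_smul (α : ℕ → ℂ) (x y : Fin n → ℂ) :
    brTP0 n α x y = nfWedge n x y • nfVec n α := rfl

theorem nfVec_apply (α : ℕ → ℂ) (k : Fin n) : nfVec n α k = α (k + 1) := by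
  simp [nfVec, Finset.sum_apply, nfE, eq_comm (a := (k : ℕ) + 1)]

theorem nfVec_ite_eq_one (c : ℂ) : nfVec n (fun t => if t = 1 then c else 0) = c • nfE n 1 := by
  ext k
  simp [nfVec_apply, nfE]

theorem TPIso.symm {B B' : (Fin n → ℂ) → (Fin n → ℂ) → (Fin n → ℂ)} (h : TPIso n B B') :
    TPIso n B' B := by
  obtain ⟨φ, hmul, hbr⟩ := h
  exact ⟨φ.symm, fun x y => φ.injective (by simp [hmul]), fun x y => φ.injective (by simp [hbr])⟩

theorem TPIso.trans {B B' B'' : (Fin n → ℂ) → (Fin n → ℂ) → (Fin n → ℂ)} (h : TPIso n B B')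
    (h' : TPIso n B' B'') : TPIso n B B'' := by
  obtain ⟨φ, hmul, hbr⟩ := h
  obtain ⟨φ', hmul', hbr'⟩ := h'
  exact ⟨φ.trans φ', fun x y => by simp [hmul, hmul'], fun x y => by simp [hbr, hbr']⟩

theorem tpIso_brTP0_of_nfSubst (w : Fin n → ℂ) (h1 : 1 < n) (hw : w ⟨0, by omega⟩ ≠ 0)
    {α β : ℕ → ℂ} (hv : nfSubst n w (nfVec n α) = w ⟨0, by omega⟩ ^ 3 • nfVec n β) :
    TPIso n (brTP0 n α) (brTP0 n β) := by
  refine ⟨LinearEquiv.ofInjectiveEndo _ (nfSubst_injective w _ hw), nfSubst_mul w,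
    fun x y => ?_⟩
  simp only [LinearEquiv.coe_ofInjectiveEndo, brTP0_eq_smul, map_smul, hv, smul_smul,
    nfWedge_nfSubst w h1, mul_comm]

end NullFiliform

/-- for `n ≥ 5` and `α₁ ≠ 0`, `TP₀(α₁,…,αₙ)` is isomorphic to
`TP₀(1,0,…,0)`. -/
theorem stmt_7 (n : ℕ) (hn : 5 ≤ n) (α : ℕ → ℂ) (hα : α 1 ≠ 0) :
    TPIso n (brTP0 n α) (brTP0 n fun t => if t = 1 then 1 else 0) := by
  have h1 : 1 < n := by omega
  obtain ⟨a, ha⟩ := IsAlgClosed.exists_pow_nat_eq (α 1) two_pos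
  have ha0 : a ≠ 0 := by rintro rfl; exact hα (by simp [← ha])
  have hv0 : nfVec n α ⟨0, by omega⟩ = α 1 := nfVec_apply α _
  have he0 : nfE n 1 ⟨0, by omega⟩ = 1 := by simp [nfE]
  have to_left : TPIso n (brTP0 n fun t => if t = 1 then α 1 ^ 3 else 0) (brTP0 n α) :=
    tpIso_brTP0_of_nfSubst (nfVec n α) h1 (by rwa [hv0]) (by
      rw [nfVec_ite_eq_one, map_smul, nfSubst_nfE_one, hv0])
  have to_right : TPIso n (brTP0 n fun t => if t = 1 then α 1 ^ 3 else 0)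
      (brTP0 n fun t => if t = 1 then 1 else 0) :=
    tpIso_brTP0_of_nfSubst (a ^ 3 • nfE n 1) h1 (by simpa [he0] using ha0) (by
      rw [nfVec_ite_eq_one, nfVec_ite_eq_one, map_smul, nfSubst_nfE_one, Pi.smul_apply, he0, ← ha]
      module)
  exact to_left.symm.trans to_right
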